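/- arXiv:1905.07777 — 6 statements merged into one kernel-verified Lean document; each statement's English description precedes it below -/
import Mathlib

section
/- Let Ω be a set, k : Ω × Ω → ℝ, x₁, …, xₙ ∈ Ω, Y ∈ ℝⁿ, and h_ini : Ω → ℝ. Suppose h₁ : Ω × [0, ∞) → ℝ solves the mean-squared-error kernel flow with labels Y and zero initial function (h₁(x, 0) = 0 and ∂ₜ h₁(x, t) = −Σᵢ k(x, xᵢ)(h₁(xᵢ, t) − Yᵢ)), and h₂ : Ω × [0, ∞) → ℝ solves the same flow with labels (h_ini(x₁), …, h_ini(xₙ)) and zero initial function. Then g(x, t) := h₁(x, t) + h_ini(x) − h₂(x, t) solves the mean-squared-error kernel flow with labels Y and initial function h_ini: g(x, 0) = h_ini(x) and ∂ₜ g(x, t) = −Σᵢ k(x, xᵢ)(g(xᵢ, t) − Yᵢ) for all x ∈ Ω and t ≥ 0. -/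
open Finset

def IsKernelFlow {Ω : Type*} {n : ℕ} (k : Ω → Ω → ℝ) (x : Fin n → Ω) (Y : Fin n → ℝ)
    (h : Ω → ℝ → ℝ) : Prop :=
  ∀ (x' : Ω) (t : ℝ), 0 ≤ t → HasDerivAt (h x') (-(∑ i, k x' (x i) * (h (x i) t - Y i))) t

theorem sum_mul_sub_sub_eq {ι R : Type*} [Fintype ι] [CommRing R] (w a b y z c : ι → R) :
    ∑ i, w i * ((a i + c i - b i) - (y i - z i + c i)) =
      ∑ i, w i * (a i - y i) - ∑ i, w i * (b i - z i) := by
  rw [← sum_sub_distrib]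
  exact sum_congr rfl fun i _ => by ring

/-- Superposition: the flow is affine in `h` and in the labels `Y`. -/
theorem IsKernelFlow.add_const_sub {Ω : Type*} {n : ℕ} {k : Ω → Ω → ℝ} {x : Fin n → Ω}
    {Y Z : Fin n → ℝ} {h₁ h₂ : Ω → ℝ → ℝ} (c : Ω → ℝ)
    (hf₁ : IsKernelFlow k x Y h₁) (hf₂ : IsKernelFlow k x Z h₂) :
    IsKernelFlow k x (fun i => Y i - Z i + c (x i)) (fun x' s => h₁ x' s + c x' - h₂ x' s) := by
  intro x' t ht
  refine (((hf₁ x' t ht).add_const (c x')).sub (hf₂ x' t ht)).congr_deriv ?_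
  rw [sum_mul_sub_sub_eq]
  ring

/-- Decomposition of the MSE kernel flow with nonzero initial output: if `h₁` solves the
flow with labels `Y` from zero and `h₂` solves the flow with labels `h_ini(X)` from
zero, then `g = h₁ + h_ini - h₂` solves the flow with labels `Y` and initial function
`h_ini`. -/
theorem stmt7 {Ω : Type*} {n : ℕ} (k : Ω → Ω → ℝ) (x : Fin n → Ω)
    (Y : Fin n → ℝ) (hini : Ω → ℝ) (h₁ h₂ : Ω → ℝ → ℝ)
    (hinit₁ : ∀ x' : Ω, h₁ x' 0 = 0)
    (hinit₂ : ∀ x' : Ω, h₂ x' 0 = 0)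
    (hflow₁ : ∀ (x' : Ω) (t : ℝ), 0 ≤ t →
      HasDerivAt (h₁ x') (-(∑ i, k x' (x i) * (h₁ (x i) t - Y i))) t)
    (hflow₂ : ∀ (x' : Ω) (t : ℝ), 0 ≤ t →
      HasDerivAt (h₂ x') (-(∑ i, k x' (x i) * (h₂ (x i) t - hini (x i)))) t) :
    (∀ x' : Ω, h₁ x' 0 + hini x' - h₂ x' 0 = hini x') ∧
    ∀ (x' : Ω) (t : ℝ), 0 ≤ t →
      HasDerivAt (fun s => h₁ x' s + hini x' - h₂ x' s)
        (-(∑ i, k x' (x i) * ((h₁ (x i) t + hini (x i) - h₂ (x i) t) - Y i))) t := by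
  refine ⟨fun x' => by simp [hinit₁, hinit₂], ?_⟩
  simpa [IsKernelFlow] using IsKernelFlow.add_const_sub hini hflow₁ hflow₂
end

section
/- Let Ω be a set, k : Ω × Ω → ℝ, x₁, …, xₙ ∈ Ω, and Y ∈ ℝⁿ. Let G ∈ ℝ^{n×n} with G_{ij} = k(x_i, x_j), and assume G is symmetric positive definite. Let h₀ : Ω → ℝ and suppose h : Ω × [0, ∞) → ℝ satisfies h(x, 0) = h₀(x) and ∂ₜ h(x, t) = −Σᵢ₌₁ⁿ k(x, xᵢ)(h(xᵢ, t) − Yᵢ) for all x ∈ Ω and t ≥ 0 (with t ↦ h(xᵢ, t) differentiable for each i). Then for every x ∈ Ω, lim_{t→∞} h(x, t) = h₀(x) + Σᵢ,ⱼ k(x, xᵢ) (G⁻¹)_{ij} (Yⱼ − h₀(xⱼ)). -/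
open Filter Topology Matrix

/-!
The residuals `r(t) = (h(xᵢ, t) - Yᵢ)ᵢ` solve the linear ODE `r' = -G r`. Positive definiteness
gives `vᵀGv ≥ c vᵀv` for some `c > 0` (compactness of the unit sphere), so Grönwall's inequality
applied to `rᵀr` yields `rᵀr ≤ r(0)ᵀr(0) e^{-2ct}`, hence `r → 0`. At any point `x`, with
`a = (k(x, xᵢ))ᵢ`, the quantity `h(x, t) - aᵀG⁻¹r(t)` has derivative `-aᵀr + aᵀG⁻¹G r = 0`, so it is
constant and the limit of `h(x, t)` is its value at `t = 0`.
-/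

theorem HasDerivAt.dotProduct {ι : Type*} [Fintype ι] {r q : ℝ → ι → ℝ} {r' q' : ι → ℝ} {t : ℝ}
    (hr : HasDerivAt r r' t) (hq : HasDerivAt q q' t) :
    HasDerivAt (fun s => r s ⬝ᵥ q s) (r' ⬝ᵥ q t + r t ⬝ᵥ q') t := by
  show HasDerivAt (fun s => ∑ i, r s i * q s i) (∑ i, r' i * q t i + ∑ i, r t i * q' i) t
  rw [← Finset.sum_add_distrib]
  exact HasDerivAt.fun_sum fun i _ => (hasDerivAt_pi.1 hr i).mul (hasDerivAt_pi.1 hq i)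

theorem le_mul_exp_of_hasDerivAt_le_mul {f f' : ℝ → ℝ} {K a t : ℝ}
    (hf : ∀ s, a ≤ s → HasDerivAt f (f' s) s) (hle : ∀ s, a ≤ s → f' s ≤ K * f s) (ht : a ≤ t) :
    f t ≤ f a * Real.exp (K * (t - a)) := by
  have := le_gronwallBound_of_liminf_deriv_right_le (ε := 0) (b := t)
    (fun s hs => (hf s hs.1).continuousAt.continuousWithinAt)
    (fun s hs _ hr => (hf s hs.1).hasDerivWithinAt.liminf_right_slope_le hr) le_rfl
    (fun s hs => by simpa using hle s hs.1) t ⟨ht, le_rfl⟩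
  rwa [gronwallBound_ε0] at this

theorem Matrix.PosDef.exists_pos_mul_dotProduct_self_le {ι : Type*} [Fintype ι]
    {A : Matrix ι ι ℝ} (hA : A.PosDef) :
    ∃ c > 0, ∀ v : ι → ℝ, c * (v ⬝ᵥ v) ≤ v ⬝ᵥ (A *ᵥ v) := by
  rcases isEmpty_or_nonempty ι with hι | hι
  · exact ⟨1, one_pos, fun v => by simp [Subsingleton.elim v 0]⟩
  let q : EuclideanSpace ℝ ι → ℝ := fun w => w.ofLp ⬝ᵥ (A *ᵥ w.ofLp)
  have hq : Continuous q := by fun_prop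
  have hq_smul (a : ℝ) (w : EuclideanSpace ℝ ι) : q (a • w) = a ^ 2 * q w := by
    simp only [q, WithLp.ofLp_smul, mulVec_smul, smul_dotProduct, dotProduct_smul, smul_eq_mul]
    ring
  obtain ⟨w₀, hw₀, hmin⟩ := (isCompact_sphere (0 : EuclideanSpace ℝ ι) 1).exists_isMinOn
    (NormedSpace.sphere_nonempty.2 zero_le_one) hq.continuousOn
  have hw₀_ne : w₀.ofLp ≠ 0 := fun h => by simp_all
  refine ⟨q w₀, hA.dotProduct_mulVec_pos hw₀_ne, fun v => ?_⟩
  rcases eq_or_ne v 0 with rfl | hv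
  · simp
  set w : EuclideanSpace ℝ ι := WithLp.toLp 2 v
  have hw : 0 < ‖w‖ := norm_pos_iff.2 (by simpa [w] using hv)
  have hvv : v ⬝ᵥ v = ‖w‖ ^ 2 := by
    rw [EuclideanSpace.norm_sq_eq]
    simp [w, dotProduct, sq]
  have hle : q w₀ ≤ (‖w‖⁻¹) ^ 2 * q w := by
    rw [← hq_smul]
    exact hmin (by simp [norm_smul, hw.ne'])
  rw [hvv]
  calc q w₀ * ‖w‖ ^ 2 ≤ (‖w‖⁻¹) ^ 2 * q w * ‖w‖ ^ 2 := by gcongr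
    _ = v ⬝ᵥ (A *ᵥ v) := by field_simp; rfl

theorem Matrix.PosDef.tendsto_zero_of_hasDerivAt_neg_mulVec {ι : Type*} [Fintype ι]
    {A : Matrix ι ι ℝ} (hA : A.PosDef) {r : ℝ → ι → ℝ}
    (hr : ∀ t, 0 ≤ t → HasDerivAt r (-(A *ᵥ r t)) t) :
    Tendsto r atTop (𝓝 0) := by
  obtain ⟨c, hc, hcoer⟩ := hA.exists_pos_mul_dotProduct_self_le
  let V : ℝ → ℝ := fun t => r t ⬝ᵥ r t
  have hV_nonneg (t : ℝ) : 0 ≤ V t := Finset.sum_nonneg fun i _ => mul_self_nonneg _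
  have hV_deriv : ∀ t, 0 ≤ t → HasDerivAt V (-2 * (r t ⬝ᵥ (A *ᵥ r t))) t := fun t ht => by
    convert (hr t ht).dotProduct (hr t ht) using 1
    rw [neg_dotProduct, dotProduct_neg, dotProduct_comm (A *ᵥ r t)]
    ring
  have hV_le : ∀ t, 0 ≤ t → V t ≤ V 0 * Real.exp (-(2 * c) * (t - 0)) := fun t ht =>
    le_mul_exp_of_hasDerivAt_le_mul hV_deriv (fun s _ => by nlinarith [hcoer (r s)]) ht
  have hV_lim : Tendsto (fun t => V 0 * Real.exp (-(2 * c) * (t - 0))) atTop (𝓝 0) := by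
    simpa using (Real.tendsto_exp_neg_atTop_nhds_zero.comp
      (tendsto_id.const_mul_atTop (by positivity : 0 < 2 * c))).const_mul (V 0)
  have hsqrt_lim : Tendsto (fun t => √(V t)) atTop (𝓝 0) := by
    have := squeeze_zero' (Eventually.of_forall hV_nonneg)
      (eventually_ge_atTop 0 |>.mono hV_le) hV_lim
    exact (Real.continuous_sqrt.tendsto' 0 0 Real.sqrt_zero).comp this
  refine squeeze_zero_norm' (Eventually.of_forall fun t => ?_) hsqrt_lim
  refine (pi_norm_le_iff_of_nonneg (Real.sqrt_nonneg _)).2 fun i => ?_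
  exact Real.abs_le_sqrt (by
    rw [sq]; exact Finset.single_le_sum (fun j _ => mul_self_nonneg (r t j)) (Finset.mem_univ i))

theorem tendsto_sub_dotProduct_of_hasDerivAt {ι : Type*} [Fintype ι] {A : Matrix ι ι ℝ}
    {a b : ι → ℝ} (hb : b ᵥ* A = a) {r : ℝ → ι → ℝ} {f : ℝ → ℝ}
    (hr : ∀ t, 0 ≤ t → HasDerivAt r (-(A *ᵥ r t)) t)
    (hf : ∀ t, 0 ≤ t → HasDerivAt f (-(a ⬝ᵥ r t)) t) (hr_lim : Tendsto r atTop (𝓝 0)) :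
    Tendsto f atTop (𝓝 (f 0 - b ⬝ᵥ r 0)) := by
  have hderiv : ∀ t, 0 ≤ t → HasDerivAt (fun s => f s - b ⬝ᵥ r s) 0 t := fun t ht => by
    refine ((hf t ht).sub ((hasDerivAt_const t b).dotProduct (hr t ht))).congr_deriv ?_
    rw [dotProduct_neg, dotProduct_mulVec, hb, zero_dotProduct, zero_add, sub_neg_eq_add,
      neg_add_cancel]
  have hconst : ∀ t, 0 ≤ t → f t - b ⬝ᵥ r t = f 0 - b ⬝ᵥ r 0 := fun t ht =>
    constant_of_has_deriv_right_zero
      (fun s hs => (hderiv s hs.1).continuousAt.continuousWithinAt)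
      (fun s hs => (hderiv s hs.1).hasDerivWithinAt) t ⟨ht, le_rfl⟩
  have hdot_lim : Tendsto (fun t => b ⬝ᵥ r t) atTop (𝓝 0) :=
    ((continuous_const.dotProduct continuous_id).tendsto' 0 0 (dotProduct_zero b)).comp hr_lim
  have hlim := (tendsto_const_nhds (x := f 0 - b ⬝ᵥ r 0)).add hdot_lim
  rw [add_zero] at hlim
  refine hlim.congr' ?_
  filter_upwards [eventually_ge_atTop 0] with t ht
  linarith [hconst t ht]

/-- Convergence of the MSE kernel gradient flow to the kernel (ridgeless) regression
solution: with a symmetric positive definite Gram matrix `G`, the flow started at `h₀`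
converges pointwise to `h₀(x) + ∑ᵢⱼ k(x, xᵢ)(G⁻¹)ᵢⱼ(Yⱼ - h₀(xⱼ))`. -/
theorem stmt9 {Ω : Type*} {n : ℕ} (k : Ω → Ω → ℝ) (x : Fin n → Ω)
    (Y : Fin n → ℝ)
    (G : Matrix (Fin n) (Fin n) ℝ) (hG : ∀ i j, G i j = k (x i) (x j))
    (hGpd : G.PosDef)
    (h₀ : Ω → ℝ) (h : Ω → ℝ → ℝ)
    (hinit : ∀ x' : Ω, h x' 0 = h₀ x')
    (hflow : ∀ (x' : Ω) (t : ℝ), 0 ≤ t →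
      HasDerivAt (h x') (-(∑ i, k x' (x i) * (h (x i) t - Y i))) t) :
    ∀ x' : Ω, Tendsto (h x') atTop
      (𝓝 (h₀ x' + ∑ i, ∑ j, k x' (x i) * G⁻¹ i j * (Y j - h₀ (x j)))) := by
  intro x'
  let r : ℝ → Fin n → ℝ := fun t i => h (x i) t - Y i
  have hr : ∀ t, 0 ≤ t → HasDerivAt r (-(G *ᵥ r t)) t := fun t ht =>
    hasDerivAt_pi.2 fun i => by
      simpa [r, mulVec, dotProduct, hG] using (hflow (x i) t ht).sub_const (Y i)
  have hGG : ((fun i => k x' (x i)) ᵥ* G⁻¹) ᵥ* G = fun i => k x' (x i) := by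
    rw [vecMul_vecMul, nonsing_inv_mul G ((isUnit_iff_isUnit_det G).1 hGpd.isUnit), vecMul_one]
  convert tendsto_sub_dotProduct_of_hasDerivAt hGG hr (hflow x')
    (hGpd.tendsto_zero_of_hasDerivAt_neg_mulVec hr) using 2
  rw [← dotProduct_mulVec]
  simp only [dotProduct, mulVec, r, hinit, Finset.mul_sum, sub_eq_add_neg,
    ← Finset.sum_neg_distrib]
  exact congrArg _ (Finset.sum_congr rfl fun i _ => Finset.sum_congr rfl fun j _ => by ring)
end

section
/- Let Ω be a compact metric space equipped with a finite Borel measure μ, let k : Ω × Ω → ℝ be continuous, x₁, …, xₙ ∈ Ω, and let G ∈ ℝ^{n×n} with G_{ij} = k(x_i, x_j) be invertible. Let f : Ω → ℝ be continuous, set Y = (f(x₁), …, f(xₙ)), and for a continuous g : Ω → ℝ define S(g)(x) := g(x) + Σᵢ,ⱼ k(x, xᵢ)(G⁻¹)_{ij}(Yⱼ − g(xⱼ)) and T(g)(x) := Σᵢ,ⱼ k(x, xᵢ)(G⁻¹)_{ij} g(xⱼ). Let (Ω', ℱ, P) be a probability space and W : Ω' → C(Ω, ℝ) a Bochner-integrable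 random continuous function (C(Ω, ℝ) with the sup norm) with E[W] = 0 and E[‖W‖_∞²] < ∞. Then E[‖S(W) − f‖²_{L²(μ)}] = ‖S(0) − f‖²_{L²(μ)} + E[‖W − T(W)‖²_{L²(μ)}], where ‖g‖²_{L²(μ)} = ∫_Ω g(x)² dμ(x). In particular E[‖S(W) − f‖²_{L²(μ)}] ≥ ‖S(0) − f‖²_{L²(μ)}. -/
open Matrix MeasureTheory

/-! Since `S g - f = (g - f) - T (g - f)` pointwise, both errors are squared `L²(μ)` norms of the
continuous linear map `L = toLp ∘ (id - T)` from `C(Ω, ℝ)` to the Hilbert space `L²(μ)`: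
`‖S(W) - f‖ = ‖L W - L f‖` and `‖W - T W‖ = ‖L W‖`. Expanding the square, the cross term
`E⟪L f, L W⟫ = ⟪L f, L (E W)⟫` vanishes because `W` has mean zero. -/

section HilbertSpace

variable {H : Type*} [NormedAddCommGroup H] [InnerProductSpace ℝ H] [CompleteSpace H]
  {Ω' : Type*} [MeasurableSpace Ω'] {P : Measure Ω'} [IsProbabilityMeasure P]

theorem integral_norm_add_sq_of_integral_eq_zero (a : H) {V : Ω' → H} (hV : Integrable V P)
    (hV₀ : ∫ ω, V ω ∂P = 0) (hV₂ : Integrable (fun ω => ‖V ω‖ ^ 2) P) :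
    ∫ ω, ‖a + V ω‖ ^ 2 ∂P = ‖a‖ ^ 2 + ∫ ω, ‖V ω‖ ^ 2 ∂P := by
  have hcross : ∫ ω, inner ℝ a (V ω) ∂P = 0 := by rw [integral_inner hV, hV₀, inner_zero_right]
  simp_rw [norm_add_sq_real]
  have hlin : Integrable (fun ω => 2 * inner ℝ a (V ω)) P := (hV.const_inner a).const_mul 2
  rw [integral_add ((integrable_const _).fun_add hlin) hV₂,
    integral_add (integrable_const _) hlin, integral_const_mul, hcross]
  simp

variable {E : Type*} [NormedAddCommGroup E] [NormedSpace ℝ E] [CompleteSpace E]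

theorem integral_norm_apply_sub_sq (L : E →L[ℝ] H) (c : E) {W : Ω' → E} (hW : Integrable W P)
    (hW₀ : ∫ ω, W ω ∂P = 0) (hW₂ : Integrable (fun ω => ‖W ω‖ ^ 2) P) :
    ∫ ω, ‖L (W ω - c)‖ ^ 2 ∂P = ‖L c‖ ^ 2 + ∫ ω, ‖L (W ω)‖ ^ 2 ∂P := by
  have hLW₂ : Integrable (fun ω => ‖L (W ω)‖ ^ 2) P := by
    refine (hW₂.const_mul (‖L‖ ^ 2)).mono'
      ((L.continuous.norm.pow 2).comp_aestronglyMeasurable hW.aestronglyMeasurable) ?_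
    filter_upwards with ω
    rw [Real.norm_of_nonneg (by positivity), ← mul_pow]
    exact pow_le_pow_left₀ (norm_nonneg _) (L.le_opNorm _) 2
  have := integral_norm_add_sq_of_integral_eq_zero (-L c) (L.integrable_comp hW)
    (by rw [L.integral_comp_comm hW, hW₀, map_zero]) hLW₂
  simpa only [map_sub, neg_add_eq_sub, norm_neg] using this

end HilbertSpace

theorem ContinuousMap.norm_toLp_two_sq {α : Type*} [TopologicalSpace α] [CompactSpace α]
    [MeasurableSpace α] [BorelSpace α] (μ : Measure α) [IsFiniteMeasure μ] (g : C(α, ℝ)) :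
    ‖ContinuousMap.toLp 2 μ ℝ g‖ ^ 2 = ∫ x, g x ^ 2 ∂μ := by
  rw [← real_inner_self_eq_norm_sq, ContinuousMap.inner_toLp]
  simp [sq]

section KernelInterpolation

variable {Ω : Type*} [TopologicalSpace Ω] {n : ℕ}

def kernelInterpolation (K : C(Ω × Ω, ℝ)) (x : Fin n → Ω) (A : Matrix (Fin n) (Fin n) ℝ) :
    C(Ω, ℝ) →L[ℝ] C(Ω, ℝ) :=
  ∑ i, ∑ j, A i j • (ContinuousMap.evalCLM ℝ (x j)).smulRight ⟨fun y => K (y, x i), by fun_prop⟩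

theorem kernelInterpolation_apply (K : C(Ω × Ω, ℝ)) (x : Fin n → Ω)
    (A : Matrix (Fin n) (Fin n) ℝ) (g : C(Ω, ℝ)) (y : Ω) :
    kernelInterpolation K x A g y = ∑ i, ∑ j, K (y, x i) * A i j * g (x j) := by
  simp only [kernelInterpolation, _root_.sum_apply, _root_.smul_apply,
    ContinuousLinearMap.smulRight_apply, ContinuousMap.evalCLM_apply, ContinuousMap.coe_sum,
    ContinuousMap.coe_smul, ContinuousMap.coe_mk, Finset.sum_apply, Pi.smul_apply, smul_eq_mul]
  exact Finset.sum_congr rfl fun i _ => Finset.sum_congr rfl fun j _ => by ring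

end KernelInterpolation

theorem stmt11_general {Ω : Type*} [MetricSpace Ω] [CompactSpace Ω]
    [MeasurableSpace Ω] [BorelSpace Ω]
    (μ : Measure Ω) [IsFiniteMeasure μ]
    {n : ℕ} (k : Ω → Ω → ℝ)
    (hk : Continuous fun p : Ω × Ω => k p.1 p.2)
    (x : Fin n → Ω)
    (G : Matrix (Fin n) (Fin n) ℝ)
    (f : Ω → ℝ) (hf : Continuous f)
    (S T : C(Ω, ℝ) → Ω → ℝ)
    (hS : ∀ (g : C(Ω, ℝ)) (x' : Ω),
      S g x' = g x' + ∑ i, ∑ j, k x' (x i) * G⁻¹ i j * (f (x j) - g (x j)))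
    (hT : ∀ (g : C(Ω, ℝ)) (x' : Ω),
      T g x' = ∑ i, ∑ j, k x' (x i) * G⁻¹ i j * g (x j))
    {Ω' : Type*} [MeasurableSpace Ω']
    (P : Measure Ω') [IsProbabilityMeasure P]
    (W : Ω' → C(Ω, ℝ)) (hWint : Integrable W P)
    (hWmean : (∫ ω, W ω ∂P) = 0)
    (hWsq : Integrable (fun ω => ‖W ω‖ ^ 2) P) :
    (∫ ω, (∫ x', (S (W ω) x' - f x') ^ 2 ∂μ) ∂P)
      = (∫ x', (S 0 x' - f x') ^ 2 ∂μ)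
        + ∫ ω, (∫ x', (W ω x' - T (W ω) x') ^ 2 ∂μ) ∂P ∧
    (∫ x', (S 0 x' - f x') ^ 2 ∂μ)
      ≤ ∫ ω, (∫ x', (S (W ω) x' - f x') ^ 2 ∂μ) ∂P := by
  set F : C(Ω, ℝ) := ⟨f, hf⟩
  set I := kernelInterpolation ⟨fun p => k p.1 p.2, hk⟩ x G⁻¹
  set L := ContinuousMap.toLp 2 μ ℝ ∘L (ContinuousLinearMap.id ℝ C(Ω, ℝ) - I)
  have hT_eq : ∀ g, ∫ x', (g x' - T g x') ^ 2 ∂μ = ‖L g‖ ^ 2 := by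
    intro g
    simp only [L, ContinuousLinearMap.comp_apply, ContinuousMap.norm_toLp_two_sq, hT, I,
      _root_.sub_apply, ContinuousLinearMap.id_apply, ContinuousMap.sub_apply,
      kernelInterpolation_apply, ContinuousMap.coe_mk]
  have hS_eq : ∀ g, ∫ x', (S g x' - f x') ^ 2 ∂μ = ‖L (g - F)‖ ^ 2 := by
    intro g
    simp only [L, ContinuousLinearMap.comp_apply, ContinuousMap.norm_toLp_two_sq, hS, I,
      _root_.sub_apply, ContinuousLinearMap.id_apply, ContinuousMap.sub_apply,
      kernelInterpolation_apply, ContinuousMap.coe_mk, F]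
    congr 1 with y
    simp only [mul_sub, Finset.sum_sub_distrib]
    ring
  have hdecomp := integral_norm_apply_sub_sq L F hWint hWmean hWsq
  simp only [hS_eq, hT_eq, zero_sub, map_neg, norm_neg]
  exact ⟨hdecomp, hdecomp ▸ le_add_of_nonneg_right (integral_nonneg fun ω => by positivity)⟩

/-- Generalization-error decomposition for a random nonzero initial output in the NTK
regime: for the trained output `S(g) = g + k(·,X)G⁻¹(Y - g(X))` and
`T(g) = k(·,X)G⁻¹ g(X)`, a Bochner-mean-zero random continuous initial output `W` with
square-integrable sup norm satisfies
`E‖S(W) - f‖²_{L²(μ)} = ‖S(0) - f‖²_{L²(μ)} + E‖W - T(W)‖²_{L²(μ)}`, hence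
`E‖S(W) - f‖²_{L²(μ)} ≥ ‖S(0) - f‖²_{L²(μ)}`. -/
theorem stmt11 {Ω : Type*} [MetricSpace Ω] [CompactSpace Ω]
    [MeasurableSpace Ω] [BorelSpace Ω]
    (μ : Measure Ω) [IsFiniteMeasure μ]
    {n : ℕ} (k : Ω → Ω → ℝ)
    (hk : Continuous fun p : Ω × Ω => k p.1 p.2)
    (x : Fin n → Ω)
    (G : Matrix (Fin n) (Fin n) ℝ) (hG : ∀ i j, G i j = k (x i) (x j))
    (hGinv : IsUnit G)
    (f : Ω → ℝ) (hf : Continuous f)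
    (S T : C(Ω, ℝ) → Ω → ℝ)
    (hS : ∀ (g : C(Ω, ℝ)) (x' : Ω),
      S g x' = g x' + ∑ i, ∑ j, k x' (x i) * G⁻¹ i j * (f (x j) - g (x j)))
    (hT : ∀ (g : C(Ω, ℝ)) (x' : Ω),
      T g x' = ∑ i, ∑ j, k x' (x i) * G⁻¹ i j * g (x j))
    {Ω' : Type*} [MeasurableSpace Ω']
    (P : Measure Ω') [IsProbabilityMeasure P]
    (W : Ω' → C(Ω, ℝ)) (hWint : Integrable W P)
    (hWmean : (∫ ω, W ω ∂P) = 0)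
    (hWsq : Integrable (fun ω => ‖W ω‖ ^ 2) P) :
    (∫ ω, (∫ x', (S (W ω) x' - f x') ^ 2 ∂μ) ∂P)
      = (∫ x', (S 0 x' - f x') ^ 2 ∂μ)
        + ∫ ω, (∫ x', (W ω x' - T (W ω) x') ^ 2 ∂μ) ∂P ∧
    (∫ x', (S 0 x' - f x') ^ 2 ∂μ)
      ≤ ∫ ω, (∫ x', (S (W ω) x' - f x') ^ 2 ∂μ) ∂P :=
  stmt11_general μ k hk x G f hf S T hS hT P W hWint hWmean hWsq
end

section
/- Let Ω be a set, h : Ω × ℝ^m → ℝ, and suppose that for each x ∈ Ω the map θ ↦ h(x, θ) is differentiable. Fix θ₀ ∈ ℝ^m and define the antisymmetrically initialized network H : Ω × (ℝ^m × ℝ^m) → ℝ by H(x, (θ₁, θ₂)) = (√2/2) h(x, θ₁) − (√2/2) h(x, θ₂). Then: (a) H(x, (θ₀, θ₀)) = 0 for all x ∈ Ω; and (b) for all x, x' ∈ Ω, the inner product of the gradients of H with respect to the full parameter vector Θ = (θ₁, θ₂) ∈ ℝ^{2m} at Θ₀ = (θ₀, θ₀) satisfies ⟨∇_Θ H(x,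 Θ₀), ∇_Θ H(x', Θ₀)⟩ = ⟨∇_θ h(x, θ₀), ∇_θ h(x', θ₀)⟩; that is, the neural tangent kernel of H at Θ₀ equals the neural tangent kernel of h at θ₀. -/
/-! At `Θ₀ = (θ₀, θ₀)` the two halves of the ASI network cancel, so its output vanishes.
Its differential at `Θ₀` is `(v, w) ↦ c (Dh v - Dh w)` with `c = √2/2`, so each coordinate
direction of `θ₁` and of `θ₂` contributes `c² ∂ⱼh(x) ∂ⱼh(x')` to the kernel, and the two
contributions add up to `2c² = 1` times the kernel of `h`. -/

open Finset

theorem fderiv_const_mul_fst_sub_const_mul_snd {E : Type*} [NormedAddCommGroup E]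
    [NormedSpace ℝ E] {f : E → ℝ} {a b : E} (ha : DifferentiableAt ℝ f a)
    (hb : DifferentiableAt ℝ f b) (c : ℝ) (v w : E) :
    fderiv ℝ (fun p : E × E => c * f p.1 - c * f p.2) (a, b) (v, w)
      = c * fderiv ℝ f a v - c * fderiv ℝ f b w := by
  have hfst : HasFDerivAt (fun p : E × E => f p.1)
      ((fderiv ℝ f a).comp (ContinuousLinearMap.fst ℝ E E)) (a, b) :=
    ha.hasFDerivAt.comp (a, b) hasFDerivAt_fst
  have hsnd : HasFDerivAt (fun p : E × E => f p.2)
      ((fderiv ℝ f b).comp (ContinuousLinearMap.snd ℝ E E)) (a, b) :=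
    hb.hasFDerivAt.comp (a, b) hasFDerivAt_snd
  have hdiffer : HasFDerivAt (fun p : E × E => c * f p.1 - c * f p.2)
      (c • (fderiv ℝ f a).comp (ContinuousLinearMap.fst ℝ E E)
        - c • (fderiv ℝ f b).comp (ContinuousLinearMap.snd ℝ E E)) (a, b) :=
    (hfst.const_mul c).sub (hsnd.const_mul c)
  rw [hdiffer.fderiv]
  simp [smul_eq_mul]

theorem sqrt_two_div_two_mul_self : Real.sqrt 2 / 2 * (Real.sqrt 2 / 2) = 1 / 2 := by
  rw [div_mul_div_comm, Real.mul_self_sqrt zero_le_two]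
  norm_num

/-- AntiSymmetrical Initialization (ASI) trick: the doubled network
`H(x, (θ₁, θ₂)) = (√2/2) h(x, θ₁) - (√2/2) h(x, θ₂)` has zero output at the
initialization `Θ₀ = (θ₀, θ₀)`, and its neural tangent kernel at `Θ₀` (the inner
product over all `2m` parameter directions) equals the neural tangent kernel of `h` at
`θ₀`. -/
theorem stmt12 {Ω : Type*} {m : ℕ} (h : Ω → (Fin m → ℝ) → ℝ)
    (hdiff : ∀ x : Ω, Differentiable ℝ (h x)) (θ₀ : Fin m → ℝ)
    (H : Ω → (Fin m → ℝ) × (Fin m → ℝ) → ℝ)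
    (hH : ∀ (x : Ω) (Θ : (Fin m → ℝ) × (Fin m → ℝ)),
      H x Θ = Real.sqrt 2 / 2 * h x Θ.1 - Real.sqrt 2 / 2 * h x Θ.2) :
    (∀ x : Ω, H x (θ₀, θ₀) = 0) ∧
    ∀ x x' : Ω,
      ((∑ j, fderiv ℝ (H x) (θ₀, θ₀) (Pi.single j 1, 0) *
            fderiv ℝ (H x') (θ₀, θ₀) (Pi.single j 1, 0))
        + ∑ j, fderiv ℝ (H x) (θ₀, θ₀) (0, Pi.single j 1) *
            fderiv ℝ (H x') (θ₀, θ₀) (0, Pi.single j 1))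
      = ∑ j, fderiv ℝ (h x) θ₀ (Pi.single j 1) *
          fderiv ℝ (h x') θ₀ (Pi.single j 1) := by
  refine ⟨fun x => by rw [hH, sub_self], fun x x' => ?_⟩
  have hfderiv : ∀ (y : Ω) (v w : Fin m → ℝ), fderiv ℝ (H y) (θ₀, θ₀) (v, w)
      = Real.sqrt 2 / 2 * fderiv ℝ (h y) θ₀ v - Real.sqrt 2 / 2 * fderiv ℝ (h y) θ₀ w := by
    intro y v w
    rw [show H y = _ from funext (hH y)]
    exact fderiv_const_mul_fst_sub_const_mul_snd (hdiff y θ₀) (hdiff y θ₀) _ v w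
  simp only [hfderiv, map_zero, mul_zero, sub_zero, zero_sub, neg_mul_neg,
    ← sum_add_distrib]
  refine sum_congr rfl fun j _ => ?_
  linear_combination (2 * fderiv ℝ (h x) θ₀ (Pi.single j 1) *
    fderiv ℝ (h x') θ₀ (Pi.single j 1)) * sqrt_two_div_two_mul_self
end

section
/- Let Ω be a set, σ : ℝ → ℝ differentiable, and u : Ω × ℝ^p → ℝ^q with ψ ↦ u(x, ψ) differentiable for each x ∈ Ω (u represents the output of the layers below the last hidden layer as a function of their parameters ψ). For parameters a ∈ ℝ^r, W ∈ ℝ^{r×q}, b ∈ ℝ^r define the original network F(x; ψ, W, b, a) = Σᵢ₌₁ʳ aᵢ σ(⟨Wᵢ, u(x, ψ)⟩ + bᵢ), and define the doubled network F'(x; ψ, W, b, a, W̃, b̃, ã) = Σᵢ₌₁ʳ aᵢ σ(⟨Wᵢ, u(x, ψ)⟩ + bᵢ) + Σᵢ₌₁ʳ ãᵢ σ(⟨W̃ᵢ, u(x, ψ)⟩ + b̃ᵢ). At the doubling initialization W̃ = W, b̃ = b, ã = −a one has, for every x ∈ Ω: (a) F'(x) = 0; and (b) the gradient of F' with respect to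 the shared lower-layer parameters ψ vanishes: ∇_ψ F'(x; ψ, W, b, a, W, b, −a) = 0. Consequently, for all x, x' ∈ Ω the lower-layer contribution to the neural tangent kernel of the doubled network vanishes: ⟨∇_ψ F'(x), ∇_ψ F'(x')⟩ = 0. -/
/-- The original network: last hidden layer with input weights `W`, biases `b`, output
weights `a`, on top of the lower-layer feature map `u` with parameters `ψ`. -/
noncomputable def Fnet {Ω : Type*} {p q r : ℕ} (σ : ℝ → ℝ)
    (u : Ω → (Fin p → ℝ) → Fin q → ℝ) (x : Ω) (ψ : Fin p → ℝ)
    (W : Fin r → Fin q → ℝ) (b a : Fin r → ℝ) : ℝ :=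
  ∑ i, a i * σ ((∑ j, W i j * u x ψ j) + b i)

/-- The doubled network: the last hidden layer is duplicated, the lower layers
(parameters `ψ`) are shared. -/
noncomputable def Fnet' {Ω : Type*} {p q r : ℕ} (σ : ℝ → ℝ)
    (u : Ω → (Fin p → ℝ) → Fin q → ℝ) (x : Ω) (ψ : Fin p → ℝ)
    (W : Fin r → Fin q → ℝ) (b a : Fin r → ℝ)
    (W' : Fin r → Fin q → ℝ) (b' a' : Fin r → ℝ) : ℝ :=
  Fnet σ u x ψ W b a + Fnet σ u x ψ W' b' a'

/-- The "doubling trick" at initialization `W̃ = W, b̃ = b, ã = -a`: the output is zero,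
the gradient with respect to the shared lower-layer parameters `ψ` vanishes, and hence
the lower-layer contribution to the neural tangent kernel vanishes. -/
theorem stmt14 {Ω : Type*} {p q r : ℕ} (σ : ℝ → ℝ) (hσ : Differentiable ℝ σ)
    (u : Ω → (Fin p → ℝ) → Fin q → ℝ) (hu : ∀ x : Ω, Differentiable ℝ (u x))
    (ψ : Fin p → ℝ) (W : Fin r → Fin q → ℝ) (b a : Fin r → ℝ) :
    (∀ x : Ω, Fnet' σ u x ψ W b a W b (-a) = 0) ∧
    (∀ x : Ω, fderiv ℝ (fun ψ' => Fnet' σ u x ψ' W b a W b (-a)) ψ = 0) ∧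
    (∀ x x' : Ω,
      ∑ j, fderiv ℝ (fun ψ' => Fnet' σ u x ψ' W b a W b (-a)) ψ (Pi.single j 1) *
        fderiv ℝ (fun ψ' => Fnet' σ u x' ψ' W b a W b (-a)) ψ (Pi.single j 1) = 0) := by
  have hzero : ∀ (x : Ω) (ψ' : Fin p → ℝ), Fnet' σ u x ψ' W b a W b (-a) = 0 := by
    intro x ψ'
    simp [Fnet', Fnet, Pi.neg_apply, neg_mul, add_neg_cancel]
  have hderiv : ∀ x : Ω, fderiv ℝ (fun ψ' => Fnet' σ u x ψ' W b a W b (-a)) ψ = 0 := by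
    intro x
    have : (fun ψ' => Fnet' σ u x ψ' W b a W b (-a)) = fun _ => (0 : ℝ) := by
      funext ψ'; exact hzero x ψ'
    rw [this]; exact fderiv_const_apply 0
  refine ⟨fun x => hzero x ψ, hderiv, fun x x' => ?_⟩
  simp [hderiv]
end

section
/- Let Ω be a set, σ : ℝ → ℝ differentiable, and u : Ω × ℝ^p → ℝ^q with ψ ↦ u(x, ψ) differentiable for each x ∈ Ω. For a ∈ ℝ^r, W ∈ ℝ^{r×q}, b ∈ ℝ^r define F(x; ψ, W, b, a) = Σᵢ₌₁ʳ aᵢ σ(⟨Wᵢ, u(x, ψ)⟩ + bᵢ) and the doubled network F'(x; ψ, W, b, a, W̃, b̃, ã) = Σᵢ₌₁ʳ aᵢ σ(⟨Wᵢ, u(x, ψ)⟩ + bᵢ) + Σᵢ₌₁ʳ ãᵢ σ(⟨W̃ᵢ, u(x, ψ)⟩ + b̃ᵢ). At the doubling initialization W̃ = W, b̃ = b, ã = −a, for all x, x' ∈ Ω the last-two-layer kernel contributions double: ⟨∇_{(W, W̃)} F'(x), ∇_{(W, W̃)} F'(x')⟩ = 2 ⟨∇_W F(x), ∇_W F(x')⟩,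 ⟨∇_{(b, b̃)} F'(x), ∇_{(b, b̃)} F'(x')⟩ = 2 ⟨∇_b F(x), ∇_b F(x')⟩, and ⟨∇_{(a, ã)} F'(x), ∇_{(a, ã)} F'(x')⟩ = 2 ⟨∇_a F(x), ∇_a F(x')⟩, where gradients of F are evaluated at (ψ, W, b, a) and gradients of F' at the doubling initialization. -/
theorem fderiv_fst_add_snd_apply {𝕜 E F G : Type*} [NontriviallyNormedField 𝕜]
    [NormedAddCommGroup E] [NormedSpace 𝕜 E] [NormedAddCommGroup F] [NormedSpace 𝕜 F]
    [NormedAddCommGroup G] [NormedSpace 𝕜 G] {f : E → G} {g : F → G} {x : E} {y : F}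
    (hf : DifferentiableAt 𝕜 f x) (hg : DifferentiableAt 𝕜 g y) (e₁ : E) (e₂ : F) :
    fderiv 𝕜 (fun z : E × F => f z.1 + g z.2) (x, y) (e₁, e₂)
      = fderiv 𝕜 f x e₁ + fderiv 𝕜 g y e₂ := by
  have h := (hf.hasFDerivAt.comp (x, y) (hasFDerivAt_fst (𝕜 := 𝕜) (F := F))).add
    (hg.hasFDerivAt.comp (x, y) (hasFDerivAt_snd (𝕜 := 𝕜) (E := E)))
  exact DFunLike.congr_fun h.fderiv (e₁, e₂)

section Fnet

variable {Ω : Type*} {p q r : ℕ} (σ : ℝ → ℝ) (u : Ω → (Fin p → ℝ) → Fin q → ℝ) (x : Ω)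
  (ψ : Fin p → ℝ) (W : Fin r → Fin q → ℝ) (b a : Fin r → ℝ)

theorem Fnet_neg : Fnet σ u x ψ W b (-a) = -Fnet σ u x ψ W b a := by
  simp [Fnet, Finset.sum_neg_distrib]

theorem Fnet_zero : Fnet σ u x ψ W b 0 = 0 := by
  simp [Fnet]

variable {σ}

theorem differentiable_Fnet_W (hσ : Differentiable ℝ σ) :
    Differentiable ℝ (fun W₀ => Fnet σ u x ψ W₀ b a) := by
  unfold Fnet; fun_prop

theorem differentiable_Fnet_b (hσ : Differentiable ℝ σ) :
    Differentiable ℝ (fun b₀ => Fnet σ u x ψ W b₀ a) := by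
  unfold Fnet; fun_prop

variable (σ)

theorem fderiv_Fnet_a_apply (e : Fin r → ℝ) :
    fderiv ℝ (fun a₀ => Fnet σ u x ψ W b a₀) a e = Fnet σ u x ψ W b e := by
  have hlin : (fun a₀ => Fnet σ u x ψ W b a₀) = ⇑(∑ i, σ ((∑ j, W i j * u x ψ j) + b i) •
      ContinuousLinearMap.proj (R := ℝ) (φ := fun _ => ℝ) i) := by
    ext a₀; simp [Fnet, mul_comm]
  rw [hlin, ContinuousLinearMap.fderiv]
  simp [Fnet, mul_comm]

variable {σ}

theorem fderiv_Fnet'_W_apply (hσ : Differentiable ℝ σ) (e₁ e₂ : Fin r → Fin q → ℝ) :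
    fderiv ℝ (fun Wp : (Fin r → Fin q → ℝ) × (Fin r → Fin q → ℝ) =>
        Fnet' σ u x ψ Wp.1 b a Wp.2 b (-a)) (W, W) (e₁, e₂)
      = fderiv ℝ (fun W₀ => Fnet σ u x ψ W₀ b a) W (e₁ - e₂) := by
  unfold Fnet'
  rw [fderiv_fst_add_snd_apply ((differentiable_Fnet_W u x ψ b a hσ) W)
    ((differentiable_Fnet_W u x ψ b (-a) hσ) W), map_sub, sub_eq_add_neg]
  simp only [Fnet_neg, fderiv_fun_neg, neg_apply]

theorem fderiv_Fnet'_b_apply (hσ : Differentiable ℝ σ) (e₁ e₂ : Fin r → ℝ) :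
    fderiv ℝ (fun bp : (Fin r → ℝ) × (Fin r → ℝ) =>
        Fnet' σ u x ψ W bp.1 a W bp.2 (-a)) (b, b) (e₁, e₂)
      = fderiv ℝ (fun b₀ => Fnet σ u x ψ W b₀ a) b (e₁ - e₂) := by
  unfold Fnet'
  rw [fderiv_fst_add_snd_apply ((differentiable_Fnet_b u x ψ W a hσ) b)
    ((differentiable_Fnet_b u x ψ W (-a) hσ) b), map_sub, sub_eq_add_neg]
  simp only [Fnet_neg, fderiv_fun_neg, neg_apply]

variable (σ)

theorem fderiv_Fnet'_a_apply (a' e₁ e₂ : Fin r → ℝ) :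
    fderiv ℝ (fun ap : (Fin r → ℝ) × (Fin r → ℝ) =>
        Fnet' σ u x ψ W b ap.1 W b ap.2) (a, a') (e₁, e₂)
      = Fnet σ u x ψ W b e₁ + Fnet σ u x ψ W b e₂ := by
  have hdiff (a₀ : Fin r → ℝ) : DifferentiableAt ℝ (fun a₁ => Fnet σ u x ψ W b a₁) a₀ := by
    unfold Fnet; fun_prop
  unfold Fnet'
  rw [fderiv_fst_add_snd_apply (hdiff a) (hdiff a'), fderiv_Fnet_a_apply,
    fderiv_Fnet_a_apply]

end Fnet

theorem stmt15_general {Ω : Type*} {p q r : ℕ} (σ : ℝ → ℝ) (hσ : Differentiable ℝ σ)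
    (u : Ω → (Fin p → ℝ) → Fin q → ℝ)
    (ψ : Fin p → ℝ) (W : Fin r → Fin q → ℝ) (b a : Fin r → ℝ) :
    (∀ x x' : Ω,
      ((∑ i, ∑ j,
        fderiv ℝ (fun Wp : (Fin r → Fin q → ℝ) × (Fin r → Fin q → ℝ) =>
          Fnet' σ u x ψ Wp.1 b a Wp.2 b (-a)) (W, W) (Pi.single i (Pi.single j 1), 0) *
        fderiv ℝ (fun Wp : (Fin r → Fin q → ℝ) × (Fin r → Fin q → ℝ) =>
          Fnet' σ u x' ψ Wp.1 b a Wp.2 b (-a)) (W, W) (Pi.single i (Pi.single j 1), 0))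
      + ∑ i, ∑ j,
        fderiv ℝ (fun Wp : (Fin r → Fin q → ℝ) × (Fin r → Fin q → ℝ) =>
          Fnet' σ u x ψ Wp.1 b a Wp.2 b (-a)) (W, W) (0, Pi.single i (Pi.single j 1)) *
        fderiv ℝ (fun Wp : (Fin r → Fin q → ℝ) × (Fin r → Fin q → ℝ) =>
          Fnet' σ u x' ψ Wp.1 b a Wp.2 b (-a)) (W, W) (0, Pi.single i (Pi.single j 1)))
      = 2 * ∑ i, ∑ j,
          fderiv ℝ (fun W0 => Fnet σ u x ψ W0 b a) W (Pi.single i (Pi.single j 1)) *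
          fderiv ℝ (fun W0 => Fnet σ u x' ψ W0 b a) W (Pi.single i (Pi.single j 1))) ∧
    (∀ x x' : Ω,
      ((∑ i,
        fderiv ℝ (fun bp : (Fin r → ℝ) × (Fin r → ℝ) =>
          Fnet' σ u x ψ W bp.1 a W bp.2 (-a)) (b, b) (Pi.single i 1, 0) *
        fderiv ℝ (fun bp : (Fin r → ℝ) × (Fin r → ℝ) =>
          Fnet' σ u x' ψ W bp.1 a W bp.2 (-a)) (b, b) (Pi.single i 1, 0))
      + ∑ i,
        fderiv ℝ (fun bp : (Fin r → ℝ) × (Fin r → ℝ) =>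
          Fnet' σ u x ψ W bp.1 a W bp.2 (-a)) (b, b) (0, Pi.single i 1) *
        fderiv ℝ (fun bp : (Fin r → ℝ) × (Fin r → ℝ) =>
          Fnet' σ u x' ψ W bp.1 a W bp.2 (-a)) (b, b) (0, Pi.single i 1))
      = 2 * ∑ i,
          fderiv ℝ (fun b0 => Fnet σ u x ψ W b0 a) b (Pi.single i 1) *
          fderiv ℝ (fun b0 => Fnet σ u x' ψ W b0 a) b (Pi.single i 1)) ∧
    (∀ x x' : Ω,
      ((∑ i,
        fderiv ℝ (fun ap : (Fin r → ℝ) × (Fin r → ℝ) =>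
          Fnet' σ u x ψ W b ap.1 W b ap.2) (a, -a) (Pi.single i 1, 0) *
        fderiv ℝ (fun ap : (Fin r → ℝ) × (Fin r → ℝ) =>
          Fnet' σ u x' ψ W b ap.1 W b ap.2) (a, -a) (Pi.single i 1, 0))
      + ∑ i,
        fderiv ℝ (fun ap : (Fin r → ℝ) × (Fin r → ℝ) =>
          Fnet' σ u x ψ W b ap.1 W b ap.2) (a, -a) (0, Pi.single i 1) *
        fderiv ℝ (fun ap : (Fin r → ℝ) × (Fin r → ℝ) =>
          Fnet' σ u x' ψ W b ap.1 W b ap.2) (a, -a) (0, Pi.single i 1))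
      = 2 * ∑ i,
          fderiv ℝ (fun a0 => Fnet σ u x ψ W b a0) a (Pi.single i 1) *
          fderiv ℝ (fun a0 => Fnet σ u x' ψ W b a0) a (Pi.single i 1)) := by
  refine ⟨fun x x' => ?_, fun x x' => ?_, fun x x' => ?_⟩
  · simp only [fderiv_Fnet'_W_apply u _ ψ W b a hσ, sub_zero, zero_sub, map_neg, neg_mul_neg,
      two_mul]
  · simp only [fderiv_Fnet'_b_apply u _ ψ W b a hσ, sub_zero, zero_sub, map_neg, neg_mul_neg,
      two_mul]
  · simp only [fderiv_Fnet'_a_apply, fderiv_Fnet_a_apply, Fnet_zero, add_zero, zero_add,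
      two_mul]

/-- The "doubling trick" at initialization `W̃ = W, b̃ = b, ã = -a`: the neural tangent
kernel contributions of the last hidden layer's input weights `(W, W̃)`, its biases
`(b, b̃)` and the output weights `(a, ã)` are exactly doubled relative to the original
network. The joint gradients over the doubled parameter groups are expressed through
the partial derivatives in each coordinate direction. -/
theorem stmt15 {Ω : Type*} {p q r : ℕ} (σ : ℝ → ℝ) (hσ : Differentiable ℝ σ)
    (u : Ω → (Fin p → ℝ) → Fin q → ℝ) (hu : ∀ x : Ω, Differentiable ℝ (u x))
    (ψ : Fin p → ℝ) (W : Fin r → Fin q → ℝ) (b a : Fin r → ℝ) :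
    (∀ x x' : Ω,
      ((∑ i, ∑ j,
        fderiv ℝ (fun Wp : (Fin r → Fin q → ℝ) × (Fin r → Fin q → ℝ) =>
          Fnet' σ u x ψ Wp.1 b a Wp.2 b (-a)) (W, W) (Pi.single i (Pi.single j 1), 0) *
        fderiv ℝ (fun Wp : (Fin r → Fin q → ℝ) × (Fin r → Fin q → ℝ) =>
          Fnet' σ u x' ψ Wp.1 b a Wp.2 b (-a)) (W, W) (Pi.single i (Pi.single j 1), 0))
      + ∑ i, ∑ j,
        fderiv ℝ (fun Wp : (Fin r → Fin q → ℝ) × (Fin r → Fin q → ℝ) =>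
          Fnet' σ u x ψ Wp.1 b a Wp.2 b (-a)) (W, W) (0, Pi.single i (Pi.single j 1)) *
        fderiv ℝ (fun Wp : (Fin r → Fin q → ℝ) × (Fin r → Fin q → ℝ) =>
          Fnet' σ u x' ψ Wp.1 b a Wp.2 b (-a)) (W, W) (0, Pi.single i (Pi.single j 1)))
      = 2 * ∑ i, ∑ j,
          fderiv ℝ (fun W0 => Fnet σ u x ψ W0 b a) W (Pi.single i (Pi.single j 1)) *
          fderiv ℝ (fun W0 => Fnet σ u x' ψ W0 b a) W (Pi.single i (Pi.single j 1))) ∧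
    (∀ x x' : Ω,
      ((∑ i,
        fderiv ℝ (fun bp : (Fin r → ℝ) × (Fin r → ℝ) =>
          Fnet' σ u x ψ W bp.1 a W bp.2 (-a)) (b, b) (Pi.single i 1, 0) *
        fderiv ℝ (fun bp : (Fin r → ℝ) × (Fin r → ℝ) =>
          Fnet' σ u x' ψ W bp.1 a W bp.2 (-a)) (b, b) (Pi.single i 1, 0))
      + ∑ i,
        fderiv ℝ (fun bp : (Fin r → ℝ) × (Fin r → ℝ) =>
          Fnet' σ u x ψ W bp.1 a W bp.2 (-a)) (b, b) (0, Pi.single i 1) *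
        fderiv ℝ (fun bp : (Fin r → ℝ) × (Fin r → ℝ) =>
          Fnet' σ u x' ψ W bp.1 a W bp.2 (-a)) (b, b) (0, Pi.single i 1))
      = 2 * ∑ i,
          fderiv ℝ (fun b0 => Fnet σ u x ψ W b0 a) b (Pi.single i 1) *
          fderiv ℝ (fun b0 => Fnet σ u x' ψ W b0 a) b (Pi.single i 1)) ∧
    (∀ x x' : Ω,
      ((∑ i,
        fderiv ℝ (fun ap : (Fin r → ℝ) × (Fin r → ℝ) =>
          Fnet' σ u x ψ W b ap.1 W b ap.2) (a, -a) (Pi.single i 1, 0) *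
        fderiv ℝ (fun ap : (Fin r → ℝ) × (Fin r → ℝ) =>
          Fnet' σ u x' ψ W b ap.1 W b ap.2) (a, -a) (Pi.single i 1, 0))
      + ∑ i,
        fderiv ℝ (fun ap : (Fin r → ℝ) × (Fin r → ℝ) =>
          Fnet' σ u x ψ W b ap.1 W b ap.2) (a, -a) (0, Pi.single i 1) *
        fderiv ℝ (fun ap : (Fin r → ℝ) × (Fin r → ℝ) =>
          Fnet' σ u x' ψ W b ap.1 W b ap.2) (a, -a) (0, Pi.single i 1))
      = 2 * ∑ i,
          fderiv ℝ (fun a0 => Fnet σ u x ψ W b a0) a (Pi.single i 1) *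
          fderiv ℝ (fun a0 => Fnet σ u x' ψ W b a0) a (Pi.single i 1)) :=
  stmt15_general σ hσ u ψ W b a
end
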